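/- Let T be a Dunford-Schwartz operator on ℓ∞ and 1 ≤ p < ∞. The set ℓ_p(T) of all x ∈ ℓ_p for which there exists x̂ ∈ ℓ_p with ‖(1/n) Σ_{k=0}^{n−1} T^k(x) − x̂‖_∞ → 0 is a closed subspace of (ℓ_p, ‖·‖_p). -/

import Mathlib

open Filter Finset Topology

/-- The supremum norm of a real sequence. -/
noncomputable def supNorm (x : ℕ → ℝ) : ℝ := ⨆ n, |x n|

/-- `x` is a bounded sequence (i.e. `x ∈ ℓ∞`). -/
def IsBdd (x : ℕ → ℝ) : Prop := ∃ C, ∀ n, |x n| ≤ C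

/-- The non-increasing rearrangement of a bounded sequence, `0`-indexed:
`(x*)_n = inf over finite F with card F ≤ n of sup_{k ∉ F} |x k|`. -/
noncomputable def rearr (x : ℕ → ℝ) (n : ℕ) : ℝ :=
  sInf { r : ℝ | ∃ F : Finset ℕ, F.card ≤ n ∧ r = ⨆ k : {k : ℕ // k ∉ F}, |x k.1| }

/-- A Dunford–Schwartz operator: a linear operator which is an `ℓ₁`-contraction
and an `ℓ∞`-contraction. -/
def IsDS (T : (ℕ → ℝ) →ₗ[ℝ] (ℕ → ℝ)) : Prop :=
  (∀ x : ℕ → ℝ, Summable (fun n => |x n|) →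
      Summable (fun n => |T x n|) ∧ ∑' n, |T x n| ≤ ∑' n, |x n|) ∧
  (∀ x : ℕ → ℝ, IsBdd x → IsBdd (T x) ∧ supNorm (T x) ≤ supNorm x)

/-- The Cesàro average `A(n,T)(x) = (1/n) ∑_{k=0}^{n-1} T^k x`. -/
noncomputable def cesaro (T : (ℕ → ℝ) →ₗ[ℝ] (ℕ → ℝ)) (n : ℕ) (x : ℕ → ℝ) : ℕ → ℝ :=
  fun s => (∑ k ∈ Finset.range n, (⇑T)^[k] x s) / n

/-- Membership in `ℓ_p`. -/
def Memlp (p : ℝ) (x : ℕ → ℝ) : Prop := Summable (fun n => |x n| ^ p)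

/-- The `ℓ_p` norm. -/
noncomputable def lpNorm (p : ℝ) (x : ℕ → ℝ) : ℝ := (∑' n, |x n| ^ p) ^ (1 / p)

/-!
The Cesàro averages `A_n` of a Dunford–Schwartz operator are again Dunford–Schwartz. Such an
operator `S` contracts every `ℓ_p`: truncating `y` at height `t` splits it into a part of sup norm
`≤ t` and an `ℓ¹` part, which gives `∑ (|S y| - t)₊ ≤ ∑ (|y| - t)₊` for all `t > 0`, and integrating
against `p (p - 1) t ^ (p - 2) dt` turns this into `∑ |S y| ^ p ≤ ∑ |y| ^ p`.

Since `‖A_n x‖_∞ ≤ ‖x‖_p`, if `x_k → x` in `ℓ_p` then `A_n x_k → A_n x` uniformly in `n`, so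
`(A_n x)_n` is uniformly Cauchy because each `(A_n x_k)_n` is. Its uniform limit is in `ℓ_p` by
Fatou's lemma and the `ℓ_p`-contractivity of `A_n`; the same argument handles sums and scalar
multiples.
-/

lemma supNorm_nonneg (x : ℕ → ℝ) : 0 ≤ supNorm x :=
  Real.iSup_nonneg fun _ => abs_nonneg _

lemma supNorm_le {x : ℕ → ℝ} {C : ℝ} (h : ∀ n, |x n| ≤ C) : supNorm x ≤ C :=
  ciSup_le h

lemma IsBdd.abs_le_supNorm {x : ℕ → ℝ} (h : IsBdd x) (n : ℕ) : |x n| ≤ supNorm x := by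
  obtain ⟨C, hC⟩ := h
  exact le_ciSup ⟨C, by rintro _ ⟨m, rfl⟩; exact hC m⟩ n

lemma IsBdd.sub {x y : ℕ → ℝ} (hx : IsBdd x) (hy : IsBdd y) : IsBdd fun n => x n - y n := by
  obtain ⟨C, hC⟩ := hx
  obtain ⟨D, hD⟩ := hy
  exact ⟨C + D, fun n => (abs_sub _ _).trans (add_le_add (hC n) (hD n))⟩

section UniformConvergence

variable {ι : Type*} {l : Filter ι} {g : ι → ℕ → ℝ} {h : ℕ → ℝ}

lemma tendstoUniformly_of_tendsto_supNorm (hb : ∀ i, IsBdd fun s => g i s - h s)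
    (H : Tendsto (fun i => supNorm fun s => g i s - h s) l (𝓝 0)) : TendstoUniformly g h l := by
  rw [Metric.tendstoUniformly_iff]
  intro ε hε
  filter_upwards [H.eventually (gt_mem_nhds hε)] with i hi s
  rw [dist_comm, Real.dist_eq]
  exact ((hb i).abs_le_supNorm s).trans_lt hi

lemma TendstoUniformly.tendsto_supNorm (H : TendstoUniformly g h l) :
    Tendsto (fun i => supNorm fun s => g i s - h s) l (𝓝 0) := by
  rw [Metric.tendsto_nhds]
  intro ε hε
  filter_upwards [Metric.tendstoUniformly_iff.1 H (ε / 2) (half_pos hε)] with i hi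
  rw [Real.dist_eq, sub_zero, abs_of_nonneg (supNorm_nonneg _)]
  refine (supNorm_le fun s => ?_).trans_lt (half_lt_self hε)
  rw [← Real.dist_eq, dist_comm]
  exact (hi s).le

end UniformConvergence

lemma exists_tendstoUniformly_of_forall_dist_le {ι α β : Type*} [Nonempty ι] [SemilatticeSup ι]
    [PseudoMetricSpace β] [CompleteSpace β] {G : ι → α → β} {F : ℕ → ι → α → β}
    {L : ℕ → α → β} {e : ℕ → ℝ} (he : Tendsto e atTop (𝓝 0))
    (hFG : ∀ k i a, dist (F k i a) (G i a) ≤ e k) (hF : ∀ k, TendstoUniformly (F k) (L k) atTop) :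
    ∃ L', TendstoUniformly G L' atTop := by
  have hG : UniformCauchySeqOn G atTop Set.univ := by
    rw [Metric.uniformCauchySeqOn_iff]
    intro ε hε
    obtain ⟨k, hk⟩ := (he.eventually (gt_mem_nhds (by positivity : 0 < ε / 4))).exists
    obtain ⟨N, hN⟩ :=
      eventually_atTop.1 (Metric.tendstoUniformly_iff.1 (hF k) (ε / 4) (by positivity))
    refine ⟨N, fun m hm n hn a _ => ?_⟩
    have h4 := dist_triangle4 (G m a) (F k m a) (F k n a) (G n a)
    have h3 := dist_triangle (F k m a) (L k a) (F k n a)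
    linarith [hFG k m a, hFG k n a, hN m hm a, hN n hn a, dist_comm (G m a) (F k m a),
      dist_comm (F k m a) (L k a)]
  choose L' hL' using fun a => cauchySeq_tendsto_of_complete (hG.cauchySeq (Set.mem_univ a))
  exact ⟨L', tendstoUniformlyOn_univ.1 (hG.tendstoUniformlyOn_of_tendsto fun a _ => hL' a)⟩

section Memlp

variable {p : ℝ} {x y : ℕ → ℝ}

lemma memlp_iff_memℓp (hp : 0 < p) : Memlp p x ↔ Memℓp x (ENNReal.ofReal p) := by
  rw [memℓp_gen_iff (by rwa [ENNReal.toReal_ofReal hp.le]), ENNReal.toReal_ofReal hp.le]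
  rfl

lemma Memlp.add (hp : 0 < p) (hx : Memlp p x) (hy : Memlp p y) : Memlp p (x + y) :=
  (memlp_iff_memℓp hp).2 (((memlp_iff_memℓp hp).1 hx).add ((memlp_iff_memℓp hp).1 hy))

lemma Memlp.sub (hp : 0 < p) (hx : Memlp p x) (hy : Memlp p y) : Memlp p (x - y) :=
  (memlp_iff_memℓp hp).2 (((memlp_iff_memℓp hp).1 hx).sub ((memlp_iff_memℓp hp).1 hy))

lemma Memlp.const_smul (hp : 0 < p) (c : ℝ) (hx : Memlp p x) : Memlp p (c • x) :=
  (memlp_iff_memℓp hp).2 (((memlp_iff_memℓp hp).1 hx).const_smul c)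

lemma Memlp.abs_le_lpNorm (hp : 0 < p) (hx : Memlp p x) (n : ℕ) : |x n| ≤ lpNorm p x := by
  have h := Real.rpow_le_rpow (by positivity)
    (hx.le_tsum n fun m _ => Real.rpow_nonneg (abs_nonneg _) _) (one_div_nonneg.2 hp.le)
  rwa [one_div, Real.rpow_rpow_inv (abs_nonneg _) hp.ne', ← one_div] at h

lemma Memlp.isBdd (hp : 0 < p) (hx : Memlp p x) : IsBdd x :=
  ⟨lpNorm p x, hx.abs_le_lpNorm hp⟩

lemma max_sub_le_rpow (hp : 1 ≤ p) {a t : ℝ} (ha : 0 ≤ a) (ht : 0 < t) :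
    max (a - t) 0 ≤ t ^ (1 - p) * a ^ p := by
  rcases le_total a t with h | h
  · rw [max_eq_right (by linarith)]
    have := ht.le
    positivity
  · rw [max_eq_left (by linarith)]
    calc a - t ≤ a ^ (1 - p) * a ^ p := by
          rw [← Real.rpow_add (ht.trans_le h)]
          norm_num
          exact ht.le
      _ ≤ t ^ (1 - p) * a ^ p := by
          gcongr ?_ * _
          exact Real.rpow_le_rpow_of_nonpos ht h (by linarith)

lemma Memlp.summable_max_sub (hp : 1 ≤ p) (hx : Memlp p x) {t : ℝ} (ht : 0 < t) :
    Summable fun s => max (|x s| - t) 0 :=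
  .of_nonneg_of_le (fun _ => le_max_right _ _)
    (fun _ => max_sub_le_rpow hp (abs_nonneg _) ht) (hx.mul_left _)

lemma memlp_of_tendsto {ι : Type*} {l : Filter ι} [l.NeBot] (hp : 0 ≤ p) {g : ι → ℕ → ℝ}
    {B : ℝ} (hg : ∀ s, Tendsto (fun i => g i s) l (𝓝 (y s)))
    (hB : ∀ i (F : Finset ℕ), ∑ s ∈ F, |g i s| ^ p ≤ B) : Memlp p y :=
  summable_of_sum_le (fun _ => by positivity) fun F =>
    le_of_tendsto' (tendsto_finsetSum F fun s _ => (hg s).abs.rpow_const (Or.inr hp))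
      fun i => hB i F

end Memlp

section LayerCake

open MeasureTheory

lemma integral_sub_mul_rpow {p : ℝ} (hp : 1 < p) {a : ℝ} (ha : 0 ≤ a) :
    ∫ t in 0..a, (a - t) * (p * (p - 1) * t ^ (p - 2)) = a ^ p := by
  have h_eq : Set.EqOn (fun t => (a - t) * (p * (p - 1) * t ^ (p - 2)))
      (fun t => p * (p - 1) * a * t ^ (p - 2) - p * (p - 1) * t ^ (p - 1)) (Set.uIcc 0 a) := by
    intro t ht
    rw [Set.uIcc_of_le ha] at ht
    have : t ^ (p - 1) = t ^ (p - 2) * t := by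
      rw [← Real.rpow_add_one' ht.1 (by linarith)]
      ring_nf
    simp only [this]
    ring
  have hint : ∀ q : ℝ, -1 < q → IntervalIntegrable (fun t : ℝ => t ^ q) volume 0 a :=
    fun q hq => intervalIntegral.intervalIntegrable_rpow' hq
  rw [intervalIntegral.integral_congr h_eq, intervalIntegral.integral_sub
      ((hint _ (by linarith)).const_mul _) ((hint _ (by linarith)).const_mul _),
    intervalIntegral.integral_const_mul, intervalIntegral.integral_const_mul,
    integral_rpow (Or.inl (by linarith)), integral_rpow (Or.inl (by linarith))]
  have e1 : p - 2 + 1 = p - 1 := by ring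
  have e2 : p - 1 + 1 = p := by ring
  have hpow : a ^ p = a ^ (p - 1) * a := by
    rw [← Real.rpow_add_one' ha (by linarith), e2]
  rw [e1, e2, Real.zero_rpow (by linarith), Real.zero_rpow (by linarith), hpow]
  have : p - 1 ≠ 0 := by linarith
  field_simp
  ring

lemma ofReal_rpow_eq_lintegral {p : ℝ} (hp : 1 < p) {a : ℝ} (ha : 0 ≤ a) :
    ENNReal.ofReal (a ^ p) = ∫⁻ t in Set.Ioi 0,
      ENNReal.ofReal (max (a - t) 0) * ENNReal.ofReal (p * (p - 1) * t ^ (p - 2)) := by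
  have h_out : ∫⁻ t in Set.Ioi a,
      ENNReal.ofReal (max (a - t) 0) * ENNReal.ofReal (p * (p - 1) * t ^ (p - 2)) = 0 := by
    rw [setLIntegral_congr_fun measurableSet_Ioi fun t (ht : a < t) => by
      rw [max_eq_right (by linarith), ENNReal.ofReal_zero, zero_mul], lintegral_zero]
  rw [← Set.Ioc_union_Ioi_eq_Ioi ha,
    lintegral_union measurableSet_Ioi (Set.Ioc_disjoint_Ioi le_rfl), h_out, add_zero, setLIntegral_congr_fun measurableSet_Ioc fun t (ht : t ∈ Set.Ioc 0 a) => by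
      rw [max_eq_left (sub_nonneg.2 ht.2), ← ENNReal.ofReal_mul (sub_nonneg.2 ht.2)]]
  have hint : IntegrableOn (fun t => (a - t) * (p * (p - 1) * t ^ (p - 2))) (Set.Ioc 0 a) :=
    (intervalIntegrable_iff_integrableOn_Ioc_of_le ha).1
      (((intervalIntegral.intervalIntegrable_rpow' (by linarith)).const_mul _).continuousOn_mul
        (continuousOn_const.sub continuousOn_id))
  have hnonneg : 0 ≤ᵐ[volume.restrict (Set.Ioc 0 a)]
      fun t => (a - t) * (p * (p - 1) * t ^ (p - 2)) :=
    ae_restrict_of_forall_mem measurableSet_Ioc fun t ht => by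
      have := ht.1.le
      have : 0 ≤ p - 1 := by linarith
      exact mul_nonneg (sub_nonneg.2 ht.2) (by positivity)
  rw [← ofReal_integral_eq_lintegral_ofReal hint hnonneg, ← intervalIntegral.integral_of_le ha,
    integral_sub_mul_rpow hp ha]

end LayerCake

namespace IsDS

variable {S U : (ℕ → ℝ) →ₗ[ℝ] (ℕ → ℝ)}

lemma one : IsDS 1 :=
  ⟨fun _ hx => ⟨hx, le_rfl⟩, fun _ hx => ⟨hx, le_rfl⟩⟩

lemma mul (hS : IsDS S) (hU : IsDS U) : IsDS (S * U) := by
  refine ⟨fun x hx => ?_, fun x hx => ?_⟩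
  · obtain ⟨hUx, hUx_le⟩ := hU.1 x hx
    obtain ⟨hSUx, hSUx_le⟩ := hS.1 _ hUx
    exact ⟨hSUx, hSUx_le.trans hUx_le⟩
  · obtain ⟨hUx, hUx_le⟩ := hU.2 x hx
    obtain ⟨hSUx, hSUx_le⟩ := hS.2 _ hUx
    exact ⟨hSUx, hSUx_le.trans hUx_le⟩

lemma pow (hS : IsDS S) (k : ℕ) : IsDS (S ^ k) := by
  induction k with
  | zero => exact one
  | succ k ih => rw [pow_succ]; exact ih.mul hS

lemma smul_sum {ι : Type*} {s : Finset ι} {S : ι → (ℕ → ℝ) →ₗ[ℝ] (ℕ → ℝ)}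
    (hS : ∀ i ∈ s, IsDS (S i)) {c : ℝ} (hc : 0 ≤ c) (hcs : c * #s ≤ 1) :
    IsDS (c • ∑ i ∈ s, S i) := by
  have hpt : ∀ x n, |(c • ∑ i ∈ s, S i) x n| ≤ c * ∑ i ∈ s, |S i x n| := fun x n => by
    simp only [LinearMap.smul_apply, LinearMap.sum_apply, Finset.sum_apply, Pi.smul_apply,
      smul_eq_mul, abs_mul, abs_of_nonneg hc]
    exact mul_le_mul_of_nonneg_left (abs_sum_le_sum_abs _ _) hc
  refine ⟨fun x hx => ?_, fun x hx => ?_⟩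
  · have hsum : ∀ i ∈ s, Summable fun n => |S i x n| := fun i hi => ((hS i hi).1 x hx).1
    have hmaj : Summable fun n => c * ∑ i ∈ s, |S i x n| := (summable_sum hsum).mul_left c
    have hsumm := Summable.of_nonneg_of_le (fun _ => abs_nonneg _) (hpt x) hmaj
    refine ⟨hsumm, ?_⟩
    calc ∑' n, |(c • ∑ i ∈ s, S i) x n| ≤ ∑' n, c * ∑ i ∈ s, |S i x n| :=
          hsumm.tsum_le_tsum (hpt x) hmaj
      _ = c * ∑ i ∈ s, ∑' n, |S i x n| := by rw [tsum_mul_left, Summable.tsum_finsetSum hsum]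
      _ ≤ c * ∑ _i ∈ s, ∑' n, |x n| :=
          mul_le_mul_of_nonneg_left (sum_le_sum fun i hi => ((hS i hi).1 x hx).2) hc
      _ = (c * #s) * ∑' n, |x n| := by rw [sum_const, nsmul_eq_mul]; ring
      _ ≤ ∑' n, |x n| := mul_le_of_le_one_left (tsum_nonneg fun _ => abs_nonneg _) hcs
  · have hbound : ∀ n, |(c • ∑ i ∈ s, S i) x n| ≤ (c * #s) * supNorm x := fun n =>
      calc _ ≤ c * ∑ i ∈ s, |S i x n| := hpt x n
        _ ≤ c * ∑ _i ∈ s, supNorm x := by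
            gcongr with i hi
            obtain ⟨hb, hle⟩ := (hS i hi).2 x hx
            exact (hb.abs_le_supNorm n).trans hle
        _ = (c * #s) * supNorm x := by rw [sum_const, nsmul_eq_mul]; ring
    exact ⟨⟨_, hbound⟩, (supNorm_le hbound).trans (mul_le_of_le_one_left (supNorm_nonneg x) hcs)⟩

lemma sum_max_sub_le (hS : IsDS S) {t : ℝ} (ht : 0 ≤ t) {y : ℕ → ℝ}
    (hy : Summable fun s => max (|y s| - t) 0) (F : Finset ℕ) :
    ∑ s ∈ F, max (|S y s| - t) 0 ≤ ∑' s, max (|y s| - t) 0 := by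
  set v : ℕ → ℝ := fun s => max (-t) (min t (y s))
  have hv : ∀ s, |v s| ≤ t := fun s =>
    abs_le.2 ⟨le_max_left _ _, max_le (by linarith) (min_le_left _ _)⟩
  have hu : ∀ s, |(y - v) s| = max (|y s| - t) 0 := fun s => by
    simp only [Pi.sub_apply, v]
    grind
  obtain ⟨hSu, hSu_le⟩ := hS.1 (y - v) (by simpa only [hu] using hy)
  obtain ⟨hSv, hSv_le⟩ := hS.2 v ⟨t, hv⟩
  have hpt : ∀ s, max (|S y s| - t) 0 ≤ |S (y - v) s| := fun s => by
    have hSvs : |S v s| ≤ t := (hSv.abs_le_supNorm s).trans (hSv_le.trans (supNorm_le hv))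
    have hSy : S y s = S (y - v) s + S v s := by simp
    refine max_le ?_ (abs_nonneg _)
    rw [hSy]
    linarith [abs_add_le (S (y - v) s) (S v s)]
  calc ∑ s ∈ F, max (|S y s| - t) 0 ≤ ∑ s ∈ F, |S (y - v) s| := sum_le_sum fun s _ => hpt s
    _ ≤ ∑' s, |S (y - v) s| := hSu.sum_le_tsum F fun _ _ => abs_nonneg _
    _ ≤ ∑' s, |(y - v) s| := hSu_le
    _ = ∑' s, max (|y s| - t) 0 := tsum_congr hu

open MeasureTheory in
lemma sum_rpow_le (hS : IsDS S) {p : ℝ} (hp : 1 ≤ p) {y : ℕ → ℝ} (hy : Memlp p y)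
    (F : Finset ℕ) : ∑ s ∈ F, |S y s| ^ p ≤ ∑' s, |y s| ^ p := by
  rcases hp.eq_or_lt with rfl | hp
  · simp only [Memlp, Real.rpow_one] at hy ⊢
    obtain ⟨hSy, hSy_le⟩ := hS.1 y hy
    exact (hSy.sum_le_tsum F fun _ _ => abs_nonneg _).trans hSy_le
  set w : ℝ → ENNReal := fun t => ENNReal.ofReal (p * (p - 1) * t ^ (p - 2))
  have hmeas : ∀ a : ℝ, Measurable fun t => ENNReal.ofReal (max (a - t) 0) * w t := by
    intro a
    fun_prop
  have hlayer : ∀ t ∈ Set.Ioi (0 : ℝ), ∑ s ∈ F, ENNReal.ofReal (max (|S y s| - t) 0) * w t ≤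
      ∑' s, ENNReal.ofReal (max (|y s| - t) 0) * w t := fun t (ht : 0 < t) => by
    have hyt := hy.summable_max_sub hp.le ht
    rw [← sum_mul, ENNReal.tsum_mul_right,
      ← ENNReal.ofReal_sum_of_nonneg fun _ _ => le_max_right _ _,
      ← ENNReal.ofReal_tsum_of_nonneg (fun _ => le_max_right _ _) hyt]
    gcongr
    exact hS.sum_max_sub_le ht.le hyt F
  rw [← ENNReal.ofReal_le_ofReal_iff (tsum_nonneg fun _ => by positivity),
    ENNReal.ofReal_sum_of_nonneg fun _ _ => by positivity,
    ENNReal.ofReal_tsum_of_nonneg (fun _ => by positivity) hy]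
  simp only [ofReal_rpow_eq_lintegral hp (abs_nonneg _)]
  calc ∑ s ∈ F, ∫⁻ t in Set.Ioi 0, ENNReal.ofReal (max (|S y s| - t) 0) * w t
      = ∫⁻ t in Set.Ioi 0, ∑ s ∈ F, ENNReal.ofReal (max (|S y s| - t) 0) * w t :=
        (lintegral_finsetSum F fun s _ => hmeas _).symm
    _ ≤ ∫⁻ t in Set.Ioi 0, ∑' s, ENNReal.ofReal (max (|y s| - t) 0) * w t :=
        setLIntegral_mono (Measurable.tsum fun s => hmeas _) hlayer
    _ = ∑' s, ∫⁻ t in Set.Ioi 0, ENNReal.ofReal (max (|y s| - t) 0) * w t :=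
        lintegral_tsum fun s => (hmeas _).aemeasurable

end IsDS

noncomputable def cesaroOp (T : (ℕ → ℝ) →ₗ[ℝ] (ℕ → ℝ)) (n : ℕ) : (ℕ → ℝ) →ₗ[ℝ] (ℕ → ℝ) :=
  (n : ℝ)⁻¹ • ∑ k ∈ range n, T ^ k

section Cesaro

variable {T : (ℕ → ℝ) →ₗ[ℝ] (ℕ → ℝ)}

lemma cesaro_eq_cesaroOp (n : ℕ) : cesaro T n = cesaroOp T n := by
  funext x s
  simp [cesaro, cesaroOp, LinearMap.sum_apply, Module.End.pow_apply, div_eq_inv_mul]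

lemma IsDS.cesaroOp (hT : IsDS T) (n : ℕ) : IsDS (cesaroOp T n) :=
  IsDS.smul_sum (fun k _ => hT.pow k) (by positivity)
    (by rw [card_range]; exact inv_mul_le_one_of_le₀ le_rfl n.cast_nonneg)

/-- Membership in the space `ℓ_p(T)`. -/
def MemlpT (T : (ℕ → ℝ) →ₗ[ℝ] (ℕ → ℝ)) (p : ℝ) (x : ℕ → ℝ) : Prop :=
  Memlp p x ∧ ∃ x' : ℕ → ℝ, Memlp p x' ∧
    Tendsto (fun n => supNorm (fun s => cesaro T n x s - x' s)) atTop (𝓝 0)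

variable (hT : IsDS T) {p : ℝ} (hp : 1 ≤ p) {x y : ℕ → ℝ}
include hT hp

lemma abs_cesaro_le_lpNorm (hx : Memlp p x) (n s : ℕ) : |cesaro T n x s| ≤ lpNorm p x := by
  have hp0 : 0 < p := zero_lt_one.trans_le hp
  obtain ⟨hb, hle⟩ := (hT.cesaroOp n).2 x (hx.isBdd hp0)
  rw [cesaro_eq_cesaroOp]
  exact (hb.abs_le_supNorm s).trans (hle.trans (supNorm_le (hx.abs_le_lpNorm hp0)))

lemma MemlpT.exists_tendstoUniformly (h : MemlpT T p x) :
    ∃ x', TendstoUniformly (fun n => cesaro T n x) x' atTop := by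
  obtain ⟨hx, x', hx', hlim⟩ := h
  exact ⟨x', tendstoUniformly_of_tendsto_supNorm (fun n =>
    IsBdd.sub ⟨_, abs_cesaro_le_lpNorm hT hp hx n⟩ (hx'.isBdd (zero_lt_one.trans_le hp))) hlim⟩

lemma memlpT_of_tendstoUniformly {x' : ℕ → ℝ} (hx : Memlp p x)
    (h : TendstoUniformly (fun n => cesaro T n x) x' atTop) : MemlpT T p x := by
  have hbound : ∀ n (F : Finset ℕ), ∑ s ∈ F, |cesaro T n x s| ^ p ≤ ∑' s, |x s| ^ p := by
    intro n F
    rw [cesaro_eq_cesaroOp]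
    exact (hT.cesaroOp n).sum_rpow_le hp hx F
  exact ⟨hx, x', memlp_of_tendsto (zero_le_one.trans hp) h.tendsto_at hbound, h.tendsto_supNorm⟩

lemma MemlpT.add (hx : MemlpT T p x) (hy : MemlpT T p y) : MemlpT T p (x + y) := by
  obtain ⟨x', hx'⟩ := hx.exists_tendstoUniformly hT hp
  obtain ⟨y', hy'⟩ := hy.exists_tendstoUniformly hT hp
  refine memlpT_of_tendstoUniformly hT hp (x' := x' + y')
    (hx.1.add (zero_lt_one.trans_le hp) hy.1) ?_
  convert hx'.add hy' using 1
  funext n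
  simp [cesaro_eq_cesaroOp]

lemma MemlpT.const_smul (c : ℝ) (hx : MemlpT T p x) : MemlpT T p (c • x) := by
  obtain ⟨x', hx'⟩ := hx.exists_tendstoUniformly hT hp
  refine memlpT_of_tendstoUniformly hT hp (x' := fun s => c * x' s)
    (hx.1.const_smul (zero_lt_one.trans_le hp) c) ?_
  convert (Real.uniformContinuous_const_mul (x := c)).comp_tendstoUniformly hx' using 1
  · funext n
    rw [cesaro_eq_cesaroOp, map_smul]
    rfl
  · rfl

lemma memlpT_of_tendsto_lpNorm {f : ℕ → ℕ → ℝ} (hx : Memlp p x) (hf : ∀ k, MemlpT T p (f k))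
    (hlim : Tendsto (fun k => lpNorm p (f k - x)) atTop (𝓝 0)) : MemlpT T p x := by
  choose L hL using fun k => (hf k).exists_tendstoUniformly hT hp
  refine (exists_tendstoUniformly_of_forall_dist_le hlim (fun k n s => ?_) hL).elim
    fun x' hx' => memlpT_of_tendstoUniformly hT hp hx hx'
  rw [Real.dist_eq, cesaro_eq_cesaroOp, ← Pi.sub_apply, ← map_sub, ← cesaro_eq_cesaroOp]
  exact abs_cesaro_le_lpNorm hT hp ((hf k).1.sub (zero_lt_one.trans_le hp) hx) n s

end Cesaro

/-- The set `ℓ_p(T)` of elements of `ℓ_p` whose Cesàro averages converge uniformly to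
an element of `ℓ_p` is a closed subspace of `(ℓ_p, ‖·‖_p)`. -/
theorem stmt7 (T : (ℕ → ℝ) →ₗ[ℝ] (ℕ → ℝ)) (hT : IsDS T) (p : ℝ) (hp : 1 ≤ p) :
    (∀ x y : ℕ → ℝ,
        (Memlp p x ∧ ∃ x' : ℕ → ℝ, Memlp p x' ∧
          Tendsto (fun n => supNorm (fun s => cesaro T n x s - x' s)) atTop (nhds 0)) →
        (Memlp p y ∧ ∃ y' : ℕ → ℝ, Memlp p y' ∧
          Tendsto (fun n => supNorm (fun s => cesaro T n y s - y' s)) atTop (nhds 0)) →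
        (Memlp p (x + y) ∧ ∃ z' : ℕ → ℝ, Memlp p z' ∧
          Tendsto (fun n => supNorm (fun s => cesaro T n (x + y) s - z' s)) atTop (nhds 0))) ∧
    (∀ (c : ℝ) (x : ℕ → ℝ),
        (Memlp p x ∧ ∃ x' : ℕ → ℝ, Memlp p x' ∧
          Tendsto (fun n => supNorm (fun s => cesaro T n x s - x' s)) atTop (nhds 0)) →
        (Memlp p (c • x) ∧ ∃ z' : ℕ → ℝ, Memlp p z' ∧
          Tendsto (fun n => supNorm (fun s => cesaro T n (c • x) s - z' s)) atTop (nhds 0))) ∧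
    (∀ (x : ℕ → ℝ) (f : ℕ → (ℕ → ℝ)), Memlp p x →
        (∀ k, Memlp p (f k) ∧ ∃ x' : ℕ → ℝ, Memlp p x' ∧
          Tendsto (fun n => supNorm (fun s => cesaro T n (f k) s - x' s)) atTop (nhds 0)) →
        Tendsto (fun k => lpNorm p (fun n => f k n - x n)) atTop (nhds 0) →
        (Memlp p x ∧ ∃ x' : ℕ → ℝ, Memlp p x' ∧
          Tendsto (fun n => supNorm (fun s => cesaro T n x s - x' s)) atTop (nhds 0))) :=
  ⟨fun _ _ hx hy => MemlpT.add hT hp hx hy, fun c _ hx => MemlpT.const_smul hT hp c hx,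
    fun _ _ hx hf hlim => memlpT_of_tendsto_lpNorm hT hp hx hf hlim⟩
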